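/- The input sequence P ∘ Q_π^j ∘ P (the parabola points, followed by the adversarial points with one raised point q_j, followed by the parabola points again) contains the vertices of its convex hull as a subsequence in x-sorted order. -/

import Mathlib

/-!
Every input point lies on or below the parabola `y = n² - x²`, and the points `p_i` and `q_j`
lie on it, so the tangent line there supports the hull and they lie on its boundary. A point
`q_k` with `k ≠ j` is a strictly positive convex combination of `p_a`, `p_{a+1}` (`a = π k`) and a
third parabola point `p_m` (`m = n` or `m = 1`); three points of a parabola are affinely
independent, so `q_k` is interior. Hence the input points on the hull boundary are exactly
`p_1, …, p_{π j}, q_j, p_{π j + 1}, …, p_n`, which is `P` with `q_j` inserted at position `π j`.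
-/

open Set

theorem mem_frontier_convexHull_of_le {E : Type*} [NormedAddCommGroup E] [NormedSpace ℝ E]
    [CompleteSpace E] {s : Set E} {x : E} (f : E →L[ℝ] ℝ) (hf : Function.Surjective f)
    (hx : x ∈ s) (hmax : ∀ y ∈ s, f y ≤ f x) : x ∈ frontier (convexHull ℝ s) := by
  have hsub : convexHull ℝ s ⊆ f ⁻¹' Iic (f x) :=
    convexHull_min hmax ((convex_Iic _).linear_preimage f.toLinearMap)
  refine ⟨subset_closure (subset_convexHull ℝ s hx), fun hint => ?_⟩
  have := interior_mono hsub hint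
  rw [f.interior_preimage hf, interior_Iic, mem_preimage, mem_Iio] at this
  exact this.false

theorem mem_frontier_convexHull_of_mem_parabola {c : ℝ} {s : Set (ℝ × ℝ)} {x : ℝ × ℝ}
    (hs : ∀ y ∈ s, y.2 ≤ c - y.1 ^ 2) (hx : x ∈ s) (hxc : x.2 = c - x.1 ^ 2) :
    x ∈ frontier (convexHull ℝ s) := by
  refine mem_frontier_convexHull_of_le ((2 * x.1) • ContinuousLinearMap.fst ℝ ℝ ℝ +
    ContinuousLinearMap.snd ℝ ℝ ℝ) (fun t => ⟨(0, t), by simp⟩) hx fun y hy => ?_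
  simp only [add_apply, smul_apply,
    ContinuousLinearMap.coe_fst', ContinuousLinearMap.coe_snd', smul_eq_mul]
  nlinarith [hs y hy, sq_nonneg (y.1 - x.1)]

theorem sum_smul_mem_interior_convexHull {ι E : Type*} [Fintype ι] [NormedAddCommGroup E]
    [NormedSpace ℝ E] [FiniteDimensional ℝ E] {p : ι → E} (hp : AffineIndependent ℝ p)
    (hcard : Fintype.card ι = Module.finrank ℝ E + 1) {w : ι → ℝ} (hw : ∀ i, 0 < w i)
    (hw₁ : ∑ i, w i = 1) : ∑ i, w i • p i ∈ interior (convexHull ℝ (range p)) := by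
  let b : AffineBasis ι ℝ E := ⟨p, hp, hp.affineSpan_eq_top_iff_card_eq_finrank_add_one.2 hcard⟩
  have hb : ⇑b = p := rfl
  rw [← hb, b.interior_convexHull, ← Finset.univ.affineCombination_eq_linear_combination _ _ hw₁]
  intro i
  rw [b.coord_apply_combination_of_mem (Finset.mem_univ i) hw₁]
  exact hw i

theorem affineIndependent_parabola {c s t u : ℝ} (hst : s ≠ t) (hsu : s ≠ u) (htu : t ≠ u) :
    AffineIndependent ℝ ![(s, c - s ^ 2), (t, c - t ^ 2), (u, c - u ^ 2)] := by
  rw [affineIndependent_iff_not_collinear_set, collinear_iff_of_mem (mem_insert _ _)]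
  rintro ⟨v, hv⟩
  obtain ⟨r, hr⟩ := hv (t, c - t ^ 2) (by simp)
  obtain ⟨r', hr'⟩ := hv (u, c - u ^ 2) (by simp)
  simp only [Prod.ext_iff, vadd_eq_add, Prod.fst_add, Prod.snd_add, Prod.smul_fst, Prod.smul_snd,
    smul_eq_mul] at hr hr'
  have : (t - s) * (u - s) * (u - t) = 0 := by
    linear_combination (u - s) * hr.2 - (t - s) * hr'.2 + r * v.2 * hr'.1 - r' * v.2 * hr.1
  simp [sub_eq_zero, hst.symm, hsu.symm, htu.symm] at this

theorem below_chord_mem_interior_convexHull {c a m ε : ℝ} (hε : 0 < ε) (hε' : ε < 1 / 2)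
    (hm : m + 1 ≤ a ∨ a + 2 ≤ m) :
    (a + 1 / 2, c - ((a + 1) ^ 2 + a ^ 2) / 2 - ε) ∈ interior (convexHull ℝ
      {(a, c - a ^ 2), (a + 1, c - (a + 1) ^ 2), (m, c - m ^ 2)}) := by
  -- the weights `1/2 + γ (m - a - 1)`, `1/2 - γ (m - a)`, `γ` reproduce the `x`-coordinate for
  -- every `γ`, and the `y`-coordinate for this one
  have hden : 0 < (m - a) * (m - a - 1) := by rcases hm with hm | hm <;> nlinarith
  obtain ⟨γ, hγ₀, hγε⟩ : ∃ γ, 0 < γ ∧ γ * ((m - a) * (m - a - 1)) = ε :=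
    ⟨ε / ((m - a) * (m - a - 1)), div_pos hε hden, div_mul_cancel₀ _ hden.ne'⟩
  have hw : ∀ i, 0 < ![1 / 2 + γ * (m - a - 1), 1 / 2 - γ * (m - a), γ] i := by
    rw [Fin.forall_fin_succ, Fin.forall_fin_succ, Fin.forall_fin_one]
    simp only [Matrix.cons_val_zero, Matrix.cons_val_succ]
    refine ⟨?_, ?_, hγ₀⟩ <;> rcases hm with hm | hm <;> nlinarith
  have hind := affineIndependent_parabola (c := c) (s := a) (t := a + 1) (u := m)
    (by linarith) (by rcases hm with hm | hm <;> linarith) (by rcases hm with hm | hm <;> linarith)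
  have := sum_smul_mem_interior_convexHull hind (by simp) hw (by simp [Fin.sum_univ_three]; ring)
  have hsum : ∑ i, ![1 / 2 + γ * (m - a - 1), 1 / 2 - γ * (m - a), γ] i •
      ![(a, c - a ^ 2), (a + 1, c - (a + 1) ^ 2), (m, c - m ^ 2)] i =
      (a + 1 / 2, c - ((a + 1) ^ 2 + a ^ 2) / 2 - ε) := by
    simp only [Fin.sum_univ_three, Matrix.cons_val_zero, Matrix.cons_val_one, Matrix.cons_val_two,
      Matrix.tail_cons, Matrix.head_cons, Prod.smul_mk, smul_eq_mul, Prod.mk_add_mk, Prod.mk.injEq]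
    exact ⟨by ring, by linear_combination (-1 : ℝ) * hγε⟩
  rwa [hsum, Matrix.range_cons, Matrix.range_cons_cons_empty, Set.singleton_union] at this

namespace List

variable {α : Type*}

theorem take_append_cons_drop_sublist {l m : List α} {q : α} (hq : q ∈ m) (i : ℕ) :
    (l.take i ++ q :: l.drop i).Sublist (l ++ m ++ l) := by
  rw [append_assoc, ← singleton_append]
  exact (take_sublist i l).append ((singleton_sublist.2 hq).append (drop_sublist i l))

theorem mem_take_append_cons_drop {l : List α} {q v : α} {i : ℕ} :
    v ∈ l.take i ++ q :: l.drop i ↔ v = q ∨ v ∈ l := by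
  conv_rhs => rw [← take_append_drop i l]
  simp only [mem_append, mem_cons]
  tauto

theorem Pairwise.take_append_cons_drop {R : α → α → Prop} {l : List α} (hl : l.Pairwise R)
    {q : α} {i : ℕ} (hlt : ∀ x ∈ l.take i, R x q) (hgt : ∀ y ∈ l.drop i, R q y) :
    (l.take i ++ q :: l.drop i).Pairwise R := by
  rw [← take_append_drop i l, pairwise_append] at hl
  obtain ⟨htake, hdrop, hcross⟩ := hl
  refine pairwise_append.2 ⟨htake, pairwise_cons.2 ⟨hgt, hdrop⟩, fun x hx y hy => ?_⟩
  rcases mem_cons.1 hy with rfl | hy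
  exacts [hlt x hx, hcross x hx y hy]

theorem mem_map_range_succ {f : ℕ → α} {n : ℕ} {v : α} :
    v ∈ (range n).map (fun i => f (i + 1)) ↔ ∃ i ∈ Icc 1 n, f i = v := by
  simp only [mem_map, mem_range, mem_Icc]
  constructor
  · rintro ⟨i, hi, rfl⟩
    exact ⟨i + 1, ⟨by omega, by omega⟩, rfl⟩
  · rintro ⟨i, ⟨hi₁, hi₂⟩, rfl⟩
    exact ⟨i - 1, by omega, by rw [Nat.sub_add_cancel hi₁]⟩

end List

theorem pairwise_fst_lt_take_append_cons_drop {f : ℕ → ℝ × ℝ} (hf : ∀ i, (f i).1 = i + 1)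
    (n b : ℕ) {q : ℝ × ℝ} (hq : q.1 = b + 1 / 2) :
    (((List.range n).map f).take b ++ q :: ((List.range n).map f).drop b).Pairwise
      (fun u v => u.1 < v.1) := by
  refine List.Pairwise.take_append_cons_drop ?_ (fun x hx => ?_) (fun y hy => ?_)
  · exact List.pairwise_lt_range.map f fun i i' h => by
      rw [hf, hf]; exact_mod_cast Nat.succ_lt_succ h
  · rw [← List.map_take, List.take_range, List.mem_map] at hx
    obtain ⟨i, hi, rfl⟩ := hx
    have : (i : ℝ) + 1 ≤ b := by exact_mod_cast (List.mem_range.1 hi).trans_le (min_le_left _ _)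
    rw [hf, hq]; linarith
  · obtain ⟨i, hi, rfl⟩ := List.mem_drop_iff_getElem.1 hy
    simp only [List.getElem_map, List.getElem_range, hf, hq]
    push_cast; linarith [(i.cast_nonneg : (0 : ℝ) ≤ i)]

theorem below_chord_mem_interior_convexHull_image {n a : ℕ} (hn : 3 ≤ n)
    (ha : a ∈ Icc 1 (n - 1)) {ε : ℝ} (hε : 0 < ε) (hε' : ε < 1 / 2) :
    ((a : ℝ) + 1 / 2, (n : ℝ) ^ 2 - (((a : ℝ) + 1) ^ 2 + (a : ℝ) ^ 2) / 2 - ε) ∈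
      interior (convexHull ℝ ((fun i : ℕ => ((i : ℝ), (n : ℝ) ^ 2 - (i : ℝ) ^ 2)) '' Icc 1 n)) := by
  obtain ⟨ha₁, ha₂⟩ := ha
  obtain ⟨m, hm, ham⟩ : ∃ m ∈ Icc 1 n, (m : ℝ) + 1 ≤ a ∨ (a : ℝ) + 2 ≤ m := by
    by_cases h : a + 2 ≤ n
    · exact ⟨n, ⟨by omega, le_rfl⟩, Or.inr (by exact_mod_cast h)⟩
    · exact ⟨1, ⟨le_rfl, by omega⟩, Or.inl (by norm_num; exact_mod_cast (by omega : 2 ≤ a))⟩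
  refine interior_mono (convexHull_mono ?_) (below_chord_mem_interior_convexHull hε hε' ham)
  simp only [insert_subset_iff, singleton_subset_iff]
  refine ⟨⟨a, ⟨ha₁, by omega⟩, rfl⟩, ⟨a + 1, ⟨by omega, by omega⟩, by push_cast; rfl⟩, ⟨m, hm, rfl⟩⟩

theorem stmt19_general (n : ℕ) (π : ℕ → ℕ)
    (hπ : Set.BijOn π (Set.Icc 1 (n - 1)) (Set.Icc 1 (n - 1)))
    (j : ℕ) (hj : j ∈ Set.Icc 1 (n - 1))
    (p : ℕ → ℝ × ℝ) (hp : ∀ i : ℕ, p i = ((i : ℝ), (n : ℝ) ^ 2 - (i : ℝ) ^ 2)) :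
    ∃ ε₀ : ℝ, 0 < ε₀ ∧ ∀ ε : ℝ, 0 < ε → ε < ε₀ →
      ∀ Q : ℕ → ℝ × ℝ,
        (∀ k ∈ Set.Icc 1 (n - 1), k ≠ j →
          Q k = ((π k : ℝ) + 1 / 2,
            (n : ℝ) ^ 2 - (((π k : ℝ) + 1) ^ 2 + (π k : ℝ) ^ 2) / 2 - ε)) →
        Q j = ((π j : ℝ) + 1 / 2, (n : ℝ) ^ 2 - ((π j : ℝ) + 1 / 2) ^ 2) →
        ∀ I : List (ℝ × ℝ),
          I = ((List.range n).map fun i => p (i + 1)) ++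
              ((List.range (n - 1)).map fun k => Q (k + 1)) ++
              ((List.range n).map fun i => p (i + 1)) →
          ∃ sub : List (ℝ × ℝ), sub.Sublist I ∧
            sub.Pairwise (fun u v => u.1 < v.1) ∧
            ∀ v : ℝ × ℝ, v ∈ sub ↔
              (v ∈ I ∧ v ∈ frontier (convexHull ℝ {r : ℝ × ℝ | r ∈ I})) := by
  refine ⟨1 / 2, one_half_pos, fun ε hε hε' Q hQ hQj I hI => ?_⟩
  set L := (List.range n).map fun i => p (i + 1)
  have hmemI : ∀ v, v ∈ I ↔ v ∈ L ∨ ∃ k ∈ Icc 1 (n - 1), Q k = v := fun v => by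
    rw [hI, List.mem_append, List.mem_append, List.mem_map_range_succ (f := Q)]
    exact or_iff_left_of_imp Or.inl
  have hQjI : Q j ∈ I := (hmemI _).2 (Or.inr ⟨j, hj, rfl⟩)
  have hparabola : ∀ v ∈ L, v.2 = n ^ 2 - v.1 ^ 2 := by
    intro v hv
    obtain ⟨i, -, rfl⟩ := List.mem_map_range_succ.1 hv
    rw [hp]
  have hbelow : ∀ v ∈ I, v.2 ≤ n ^ 2 - v.1 ^ 2 := by
    intro v hv
    rcases (hmemI v).1 hv with hv | ⟨k, hk, rfl⟩
    · exact (hparabola v hv).le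
    by_cases hkj : k = j
    · rw [hkj, hQj]
    rw [hQ k hk hkj]
    nlinarith
  have hinterior : ∀ k ∈ Icc 1 (n - 1), k ≠ j → Q k ∈ interior (convexHull ℝ {r | r ∈ I}) := by
    intro k hk hkj
    refine interior_mono (convexHull_mono ?_) (hQ k hk hkj ▸
      below_chord_mem_interior_convexHull_image (by grind) (hπ.mapsTo hk) hε hε')
    rintro _ ⟨i, hi, rfl⟩
    exact (hmemI _).2 (Or.inl (List.mem_map_range_succ.2 ⟨i, hi, hp i⟩))
  refine ⟨L.take (π j) ++ Q j :: L.drop (π j), ?_, ?_, fun v => ?_⟩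
  · rw [hI]
    exact List.take_append_cons_drop_sublist (List.mem_map_range_succ.2 ⟨j, hj, rfl⟩) _
  · exact pairwise_fst_lt_take_append_cons_drop (fun i => by simp [hp]) n _ (by rw [hQj])
  rw [List.mem_take_append_cons_drop]
  constructor
  · rintro (rfl | hv)
    · exact ⟨hQjI, mem_frontier_convexHull_of_mem_parabola hbelow hQjI (by rw [hQj])⟩
    · have hvI := (hmemI v).2 (Or.inl hv)
      exact ⟨hvI, mem_frontier_convexHull_of_mem_parabola hbelow hvI (hparabola v hv)⟩
  rintro ⟨hvI, hvfront⟩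
  rcases (hmemI v).1 hvI with hv | ⟨k, hk, rfl⟩
  · exact Or.inr hv
  by_cases hkj : k = j
  · exact Or.inl (hkj ▸ rfl)
  exact absurd (hinterior k hk hkj) hvfront.2

/-- the input sequence `P ∘ Q_π^j ∘ P` — the parabola points
`p_1, …, p_n`, followed by the adversarial points `Q_π^j` (where `q_k` for
`k ≠ j` lies slightly below the midpoint of the hull edge `p_{π(k)} p_{π(k)+1}`,
and `q_j` lies on the parabola), followed by the parabola points again —
contains the vertices of its convex hull as a subsequence sorted by
`x`-coordinate. -/
theorem stmt19 (n : ℕ) (hn : 2 ≤ n) (π : ℕ → ℕ)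
    (hπ : Set.BijOn π (Set.Icc 1 (n - 1)) (Set.Icc 1 (n - 1)))
    (j : ℕ) (hj : j ∈ Set.Icc 1 (n - 1))
    (p : ℕ → ℝ × ℝ) (hp : ∀ i : ℕ, p i = ((i : ℝ), (n : ℝ) ^ 2 - (i : ℝ) ^ 2)) :
    ∃ ε₀ : ℝ, 0 < ε₀ ∧ ∀ ε : ℝ, 0 < ε → ε < ε₀ →
      ∀ Q : ℕ → ℝ × ℝ,
        (∀ k ∈ Set.Icc 1 (n - 1), k ≠ j →
          Q k = ((π k : ℝ) + 1 / 2,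
            (n : ℝ) ^ 2 - (((π k : ℝ) + 1) ^ 2 + (π k : ℝ) ^ 2) / 2 - ε)) →
        Q j = ((π j : ℝ) + 1 / 2, (n : ℝ) ^ 2 - ((π j : ℝ) + 1 / 2) ^ 2) →
        ∀ I : List (ℝ × ℝ),
          I = ((List.range n).map fun i => p (i + 1)) ++
              ((List.range (n - 1)).map fun k => Q (k + 1)) ++
              ((List.range n).map fun i => p (i + 1)) →
          ∃ sub : List (ℝ × ℝ), sub.Sublist I ∧
            sub.Pairwise (fun u v => u.1 < v.1) ∧
            ∀ v : ℝ × ℝ, v ∈ sub ↔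
              (v ∈ I ∧ v ∈ frontier (convexHull ℝ {r : ℝ × ℝ | r ∈ I})) :=
  stmt19_general n π hπ j hj p hp
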